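/- arXiv:2309.08682 — 9 statements merged into one kernel-verified Lean document; each statement's English description precedes it below -/
import Mathlib

section
/- Let V be a finite-dimensional real vector space and B a symmetric bilinear form on V. Let X_1, …, X_ν ∈ V (ν ≥ 1) be linearly independent, let W = span(X_1,…,X_ν) and W^⊥ = {u ∈ V : B(u,w) = 0 for all w ∈ W}, and assume B is negative definite on W, B is positive definite on W^⊥, and V = W ⊕ W^⊥ (internal direct sum). If v ∈ V satisfies v ≠ 0, B(v,v) ≤ 0, and B(v,X_i) ≤ 0 for all i = 1,…,ν, then there exists at least one index j ∈ {1,…,ν} with B(v,X_j) < 0. -/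
/-- Lemma 5.3: in the tangent space model of an `(n−ν,ν)`-spacetime
(symmetric bilinear form `B`, linearly independent `X₁,…,X_ν` spanning a
negative definite subspace `W`, `B` positive definite on `W^⊥`, and
`V = W ⊕ W^⊥`), every future directed causal vector `v` (i.e. `v ≠ 0`,
`B(v,v) ≤ 0`, `B(v,Xᵢ) ≤ 0` for all `i`) satisfies `B(v,Xⱼ) < 0` for some `j`. -/
theorem exists_strictly_negative_pairing_of_causal
    (V : Type*) [AddCommGroup V] [Module ℝ V] [FiniteDimensional ℝ V]
    (B : LinearMap.BilinForm ℝ V) (hsymm : ∀ u w : V, B u w = B w u)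
    (ν : ℕ) (hν : 1 ≤ ν) (X : Fin ν → V) (hX : LinearIndependent ℝ X)
    (hnegW : ∀ w ∈ Submodule.span ℝ (Set.range X), w ≠ 0 → B w w < 0)
    (hposWperp : ∀ u ∈ B.orthogonal (Submodule.span ℝ (Set.range X)), u ≠ 0 → 0 < B u u)
    (hcompl : IsCompl (Submodule.span ℝ (Set.range X))
      (B.orthogonal (Submodule.span ℝ (Set.range X))))
    (v : V) (hv0 : v ≠ 0) (hvv : B v v ≤ 0) (hvX : ∀ i : Fin ν, B v (X i) ≤ 0) :
    ∃ j : Fin ν, B v (X j) < 0 := by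
  by_contra h
  push_neg at h
  have hzero : ∀ i, B v (X i) = 0 := fun i => le_antisymm (hvX i) (h i)
  have hmem : v ∈ B.orthogonal (Submodule.span ℝ (Set.range X)) := by
    intro w hw
    induction hw using Submodule.span_induction with
    | mem x hx =>
      obtain ⟨i, rfl⟩ := hx
      simpa [LinearMap.BilinForm.IsOrtho, hsymm (X i) v] using hzero i
    | zero => simp [LinearMap.BilinForm.IsOrtho]
    | add x y hx hy ihx ihy =>
      simpa [LinearMap.BilinForm.IsOrtho] using by
        simp [map_add, LinearMap.add_apply, ihx, ihy]
    | smul a x hx ihx =>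
      simp [ihx]
  exact absurd hvv (not_le.mpr (hposWperp v hmem hv0))
end

section
/- Let V be a finite-dimensional real vector space and B a symmetric bilinear form on V. Let X_1, …, X_ν ∈ V (ν ≥ 1) be linearly independent, let W = span(X_1,…,X_ν) and W^⊥ = {u ∈ V : B(u,w) = 0 for all w ∈ W}, and assume B is negative definite on W, B is positive definite on W^⊥, and V = W ⊕ W^⊥ (internal direct sum). If v ∈ V satisfies B(v,v) ≤ 0 and B(v,X_i) = 0 for all i = 1,…,ν, then v = 0. Consequently, the future causal cone C = {v ≠ 0 : B(v,v) ≤ 0 and B(v,X_i) ≤ 0 for all i} is sharp: C ∪ {0} contains no line through the origin, i.e. if v ∈ C then −v ∉ C. -/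
/-- Sharpness part of Theorem 5.7: in the tangent space model of an
`(n−ν,ν)`-spacetime, any `v` with `B(v,v) ≤ 0` and `B(v,Xᵢ) = 0` for all `i`
vanishes; consequently the future causal cone
`C = {v ≠ 0 : B(v,v) ≤ 0, B(v,Xᵢ) ≤ 0 ∀i}` is sharp: if `v ∈ C` then `−v ∉ C`. -/
theorem causal_cone_sharp
    (V : Type*) [AddCommGroup V] [Module ℝ V] [FiniteDimensional ℝ V]
    (B : LinearMap.BilinForm ℝ V) (hsymm : ∀ u w : V, B u w = B w u)
    (ν : ℕ) (hν : 1 ≤ ν) (X : Fin ν → V) (hX : LinearIndependent ℝ X)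
    (hnegW : ∀ w ∈ Submodule.span ℝ (Set.range X), w ≠ 0 → B w w < 0)
    (hposWperp : ∀ u ∈ B.orthogonal (Submodule.span ℝ (Set.range X)), u ≠ 0 → 0 < B u u)
    (hcompl : IsCompl (Submodule.span ℝ (Set.range X))
      (B.orthogonal (Submodule.span ℝ (Set.range X)))) :
    (∀ v : V, B v v ≤ 0 → (∀ i : Fin ν, B v (X i) = 0) → v = 0) ∧
    (∀ v : V, (v ≠ 0 ∧ B v v ≤ 0 ∧ ∀ i : Fin ν, B v (X i) ≤ 0) →
      ¬ (-v ≠ 0 ∧ B (-v) (-v) ≤ 0 ∧ ∀ i : Fin ν, B (-v) (X i) ≤ 0)) := by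
  have key : ∀ v : V, B v v ≤ 0 → (∀ i : Fin ν, B v (X i) = 0) → v = 0 := by
    intro v hvv hvX
    have hmem : v ∈ B.orthogonal (Submodule.span ℝ (Set.range X)) := by
      intro n hn
      induction hn using Submodule.span_induction with
      | mem x hx =>
        obtain ⟨i, rfl⟩ := hx
        simpa [LinearMap.BilinForm.IsOrtho, hsymm (X i) v] using hvX i
      | zero => simp [LinearMap.BilinForm.IsOrtho]
      | add x y _ _ hx hy =>
        simpa [LinearMap.BilinForm.IsOrtho] using by
          simp [hx, hy]
      | smul c x _ hx =>
        simp [LinearMap.BilinForm.IsOrtho] at hx ⊢; simp [hx]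
    by_contra hne
    exact absurd hvv (not_le.mpr (hposWperp v hmem hne)).elim
  refine ⟨key, ?_⟩
  rintro v ⟨hne, hvv, hvX⟩ ⟨_, _, hvX'⟩
  apply hne
  apply key v hvv
  intro i
  have h1 := hvX i
  have h2 := hvX' i
  simp at h2
  linarith
end

section
/- Let V be a finite-dimensional real vector space and B a symmetric bilinear form on V. Let X_1, …, X_ν ∈ V (ν ≥ 1) be linearly independent, let W = span(X_1,…,X_ν) and W^⊥ = {u ∈ V : B(u,w) = 0 for all w ∈ W}, and assume B is negative definite on W, B is positive definite on W^⊥, and V = W ⊕ W^⊥ (internal direct sum). Then there exists a vector v ∈ W with v ≠ 0 such that B(v,v) < 0 and B(v,X_i) < 0 for every i = 1,…,ν; i.e. there exists a future directed timelike vector, so the future causal cone has nonempty interior. -/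
/-- Nonempty-interior (properness) part of Theorem 5.7: in the tangent space
model of an `(n−ν,ν)`-spacetime there is a nonzero `v ∈ W = span(X₁,…,X_ν)` with
`B(v,v) < 0` and `B(v,Xᵢ) < 0` for all `i`, i.e. a future directed timelike vector. -/
theorem exists_future_directed_timelike
    (V : Type*) [AddCommGroup V] [Module ℝ V] [FiniteDimensional ℝ V]
    (B : LinearMap.BilinForm ℝ V) (hsymm : ∀ u w : V, B u w = B w u)
    (ν : ℕ) (hν : 1 ≤ ν) (X : Fin ν → V) (hX : LinearIndependent ℝ X)
    (hnegW : ∀ w ∈ Submodule.span ℝ (Set.range X), w ≠ 0 → B w w < 0)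
    (hposWperp : ∀ u ∈ B.orthogonal (Submodule.span ℝ (Set.range X)), u ≠ 0 → 0 < B u u)
    (hcompl : IsCompl (Submodule.span ℝ (Set.range X))
      (B.orthogonal (Submodule.span ℝ (Set.range X)))) :
    ∃ v ∈ Submodule.span ℝ (Set.range X), v ≠ 0 ∧ B v v < 0 ∧
      ∀ i : Fin ν, B v (X i) < 0 := by
  set W := Submodule.span ℝ (Set.range X) with hW
  -- The linear map W → ℝ^ν, w ↦ (B w (X i))ᵢ
  let L : W →ₗ[ℝ] (Fin ν → ℝ) :=
    { toFun := fun w i => B w.1 (X i)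
      map_add' := by intro a b; ext i; simp
      map_smul' := by intro c a; ext i; simp }
  have hLinj : Function.Injective L := by
    rw [← LinearMap.ker_eq_bot, Submodule.eq_bot_iff]
    intro w hw
    have hw' : ∀ i, B w.1 (X i) = 0 := fun i => congrFun hw i
    have horth : w.1 ∈ B.orthogonal W := by
      intro x hx
      induction hx using Submodule.span_induction with
      | mem x hx =>
        obtain ⟨i, rfl⟩ := hx
        exact (hsymm _ _).trans (hw' i)
      | zero => simp [LinearMap.BilinForm.isOrtho_def]
      | add x y _ _ hx hy =>
        simp only [LinearMap.BilinForm.isOrtho_def, map_add, LinearMap.add_apply] at hx hy ⊢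
        rw [hx, hy, add_zero]
      | smul c x _ hx =>
        simp only [LinearMap.BilinForm.isOrtho_def, map_smul, LinearMap.smul_apply] at hx ⊢
        rw [hx, smul_zero]
    have : w.1 ∈ W ⊓ B.orthogonal W := ⟨w.2, horth⟩
    rw [hcompl.inf_eq_bot] at this
    exact Subtype.ext this
  have hrank : Module.finrank ℝ W = Module.finrank ℝ (Fin ν → ℝ) := by
    rw [finrank_span_eq_card hX]
    simp
  have hLsurj : Function.Surjective L :=
    (LinearMap.injective_iff_surjective_of_finrank_eq_finrank hrank).mp hLinj
  obtain ⟨v, hv⟩ := hLsurj (fun _ => -1)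
  have hvX : ∀ i, B v.1 (X i) = -1 := fun i => congrFun hv i
  have hvne : v.1 ≠ 0 := by
    intro h
    have := hvX ⟨0, hν⟩
    rw [h] at this
    simp at this
  exact ⟨v.1, v.2, hvne, hnegW v.1 v.2 hvne, fun i => by rw [hvX i]; norm_num⟩
end

section
/- For integers 0 < ν ≤ n, let C = {v ∈ ℝ^n, v ≠ 0 : v_i ≥ 0 for all 1 ≤ i ≤ ν, and ∑_{i=1}^ν v_i² ≥ ∑_{j=ν+1}^n v_j²} be the future causal cone of ℝ^{n−ν,ν} and T(x) = ∑_{i=1}^ν x_i. If γ : [0,1] → ℝ^n is Lipschitz and for almost every s ∈ [0,1] the derivative γ'(s) exists and lies in C ∪ {0}, then T(γ(1)) − T(γ(0)) ≥ ½‖γ(1) − γ(0)‖, where ‖·‖ is the Euclidean norm; in particular T(γ(1)) > T(γ(0)) whenever γ(1) ≠ γ(0). -/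
/-!
A causal vector `v` has `T(v)² ≥ ∑_{i<ν} vᵢ² ≥ ‖v‖²/2`, so `T(v) ≥ ½‖v‖ ≥ ½⟪e, v⟫` for every
`‖e‖ ≤ 1`. Taking `e` to be the unit vector along `w = γ(1) − γ(0)`, the linear functional
`x ↦ T(x) − ½⟪e, x⟫` is nonnegative on the derivatives of `γ`; since `γ` is Lipschitz, hence
absolutely continuous, this functional does not decrease along `γ`, and its increment is
`T(γ(1)) − T(γ(0)) − ½‖w‖`.
-/

open Finset MeasureTheory

/-- The future causal cone of `ℝ^{n−ν,ν}`. -/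
def flatFutureCone (n ν : ℕ) : Set (EuclideanSpace ℝ (Fin n)) :=
  {v | v ≠ 0 ∧ (∀ i : Fin n, (i : ℕ) < ν → 0 ≤ v i) ∧
    ∑ j ∈ Finset.univ.filter (fun j : Fin n => ¬ (j : ℕ) < ν), v j ^ 2 ≤
      ∑ i ∈ Finset.univ.filter (fun i : Fin n => (i : ℕ) < ν), v i ^ 2}

/-- The canonical time function `T(x) = ∑_{i<ν} xᵢ` of `ℝ^{n−ν,ν}`. -/
def flatTime (n ν : ℕ) (x : EuclideanSpace ℝ (Fin n)) : ℝ :=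
  ∑ i ∈ Finset.univ.filter (fun i : Fin n => (i : ℕ) < ν), x i

theorem AbsolutelyContinuousOnInterval.le_of_ae_hasDerivAt_nonneg {f : ℝ → ℝ} {a b : ℝ}
    (hf : AbsolutelyContinuousOnInterval f a b) (hab : a ≤ b)
    (hderiv : ∀ᵐ s ∂(volume : Measure ℝ), s ∈ Set.Icc a b → ∃ d, HasDerivAt f d s ∧ 0 ≤ d) :
    f a ≤ f b := by
  rw [← sub_nonneg, ← hf.integral_deriv_eq_sub]
  refine intervalIntegral.integral_nonneg_of_ae_restrict hab ?_
  filter_upwards [ae_restrict_of_ae hderiv, ae_restrict_mem measurableSet_Icc] with s hs hmem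
  obtain ⟨d, hd, hd_nonneg⟩ := hs hmem
  simpa [hd.deriv] using hd_nonneg

theorem LipschitzOnWith.le_apply_of_ae_hasDerivAt_mem {E : Type*} [NormedAddCommGroup E]
    [NormedSpace ℝ E] {γ : ℝ → E} {K : NNReal} {a b : ℝ} (hγ : LipschitzOnWith K γ (Set.Icc a b))
    (hab : a ≤ b) (ℓ : E →L[ℝ] ℝ) {C : Set E} (hC : ∀ v ∈ C, 0 ≤ ℓ v)
    (hderiv : ∀ᵐ s ∂(volume : Measure ℝ), s ∈ Set.Icc a b → ∃ v, HasDerivAt γ v s ∧ v ∈ C) :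
    ℓ (γ a) ≤ ℓ (γ b) := by
  have hℓγ : LipschitzOnWith (‖ℓ‖₊ * K) (ℓ ∘ γ) (Set.uIcc a b) := by
    rw [Set.uIcc_of_le hab]
    exact ℓ.lipschitz.comp_lipschitzOnWith hγ
  refine hℓγ.absolutelyContinuousOnInterval.le_of_ae_hasDerivAt_nonneg hab ?_
  filter_upwards [hderiv] with s hs hmem
  obtain ⟨v, hv, hvC⟩ := hs hmem
  exact ⟨ℓ v, ℓ.hasFDerivAt.comp_hasDerivAt s hv, hC v hvC⟩

noncomputable def flatTimeVector (n ν : ℕ) : EuclideanSpace ℝ (Fin n) :=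
  WithLp.toLp 2 (fun i => if (i : ℕ) < ν then 1 else 0)

theorem inner_flatTimeVector {n ν : ℕ} (x : EuclideanSpace ℝ (Fin n)) :
    inner ℝ (flatTimeVector n ν) x = flatTime n ν x := by
  rw [PiLp.inner_apply, flatTime, Finset.sum_filter]
  congr 1 with i
  simp [flatTimeVector]

theorem flatTime_sub {n ν : ℕ} (x y : EuclideanSpace ℝ (Fin n)) :
    flatTime n ν (x - y) = flatTime n ν x - flatTime n ν y := by
  simp only [← inner_flatTimeVector, inner_sub_right]

theorem half_norm_le_flatTime {n ν : ℕ} {v : EuclideanSpace ℝ (Fin n)}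
    (hv : v ∈ flatFutureCone n ν) : (1 / 2) * ‖v‖ ≤ flatTime n ν v := by
  obtain ⟨-, hpast, hcausal⟩ := hv
  set A := ∑ i ∈ Finset.univ.filter (fun i : Fin n => (i : ℕ) < ν), v i ^ 2
  set B := ∑ j ∈ Finset.univ.filter (fun j : Fin n => ¬ (j : ℕ) < ν), v j ^ 2
  have hnorm : ‖v‖ ^ 2 = A + B := by
    rw [EuclideanSpace.norm_eq, Real.sq_sqrt (by positivity)]
    simp only [Real.norm_eq_abs, sq_abs]
    rw [Finset.sum_filter_add_sum_filter_not]
  have hT_nonneg : 0 ≤ flatTime n ν v :=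
    Finset.sum_nonneg fun i hi => hpast i (Finset.mem_filter.1 hi).2
  have hA_le : A ≤ flatTime n ν v ^ 2 :=
    Finset.sum_sq_le_sq_sum_of_nonneg fun i hi => hpast i (Finset.mem_filter.1 hi).2
  nlinarith [norm_nonneg v]

theorem half_inner_le_flatTime {n ν : ℕ} {e v : EuclideanSpace ℝ (Fin n)} (he : ‖e‖ ≤ 1)
    (hv : v ∈ flatFutureCone n ν) : (1 / 2) * inner ℝ e v ≤ flatTime n ν v := by
  have hCS : inner ℝ e v ≤ ‖v‖ :=
    (real_inner_le_norm e v).trans (mul_le_of_le_one_left (norm_nonneg v) he)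
  linarith [half_norm_le_flatTime hv]

theorem flatTime_along_causal_curves_general (n ν : ℕ)
    (γ : ℝ → EuclideanSpace ℝ (Fin n)) (K : NNReal) (hγ : LipschitzWith K γ)
    (hderiv : ∀ᵐ s ∂(volume : Measure ℝ), s ∈ Set.Icc (0 : ℝ) 1 →
      ∃ v, HasDerivAt γ v s ∧ (v = 0 ∨ v ∈ flatFutureCone n ν)) :
    (1 / 2) * ‖γ 1 - γ 0‖ ≤ flatTime n ν (γ 1) - flatTime n ν (γ 0) ∧
    (γ 1 ≠ γ 0 → flatTime n ν (γ 0) < flatTime n ν (γ 1)) := by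
  set w := γ 1 - γ 0
  set e := ‖w‖⁻¹ • w
  have he : ‖e‖ ≤ 1 := by
    rcases eq_or_ne w 0 with hw | hw
    · simp [e, hw]
    · exact (norm_smul_inv_norm hw).le
  set ℓ := innerSL ℝ (flatTimeVector n ν - (1 / 2 : ℝ) • e)
  have hℓ_apply : ∀ x, ℓ x = flatTime n ν x - (1 / 2) * inner ℝ e x := fun x => by
    simp [ℓ, inner_flatTimeVector]
  have hℓ_causal : ∀ v ∈ {v | v = 0 ∨ v ∈ flatFutureCone n ν}, 0 ≤ ℓ v := by
    rintro v (rfl | hv)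
    · simp
    · rw [hℓ_apply]
      linarith [half_inner_le_flatTime he hv]
  have hmono := hγ.lipschitzOnWith.le_apply_of_ae_hasDerivAt_mem zero_le_one ℓ hℓ_causal hderiv
  have he_w : inner ℝ e w = ‖w‖ := by
    rw [real_inner_smul_left, real_inner_self_eq_norm_sq]
    rcases eq_or_ne ‖w‖ 0 with hw | hw
    · simp [hw]
    · field_simp
  have hΔT : (1 / 2) * ‖w‖ ≤ flatTime n ν (γ 1) - flatTime n ν (γ 0) := by
    have := sub_nonneg.2 hmono
    rwa [← map_sub, hℓ_apply, he_w, flatTime_sub, sub_nonneg] at this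
  refine ⟨hΔT, fun hne => ?_⟩
  have : 0 < ‖w‖ := norm_pos_iff.2 (sub_ne_zero.2 hne)
  linarith

/-- Section 5.3: along any Lipschitz curve `γ : [0,1] → ℝ^{n−ν,ν}` whose
a.e. derivative lies in `C ∪ {0}`, the canonical time function satisfies
`T(γ(1)) − T(γ(0)) ≥ ½‖γ(1) − γ(0)‖`; in particular `T(γ(1)) > T(γ(0))`
whenever `γ(1) ≠ γ(0)`. -/
theorem flatTime_along_causal_curves (n ν : ℕ) (hν : 0 < ν) (hn : ν ≤ n)
    (γ : ℝ → EuclideanSpace ℝ (Fin n)) (K : NNReal) (hγ : LipschitzWith K γ)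
    (hderiv : ∀ᵐ s ∂(volume : Measure ℝ), s ∈ Set.Icc (0 : ℝ) 1 →
      ∃ v, HasDerivAt γ v s ∧ (v = 0 ∨ v ∈ flatFutureCone n ν)) :
    (1 / 2) * ‖γ 1 - γ 0‖ ≤ flatTime n ν (γ 1) - flatTime n ν (γ 0) ∧
    (γ 1 ≠ γ 0 → flatTime n ν (γ 0) < flatTime n ν (γ 1)) :=
  flatTime_along_causal_curves_general n ν γ K hγ hderiv
end

section
/- For integers 0 < ν < n and k ≥ 1, let C = {v ∈ ℝ^n, v ≠ 0 : v_i ≥ 0 for all 1 ≤ i ≤ ν, and ∑_{i=1}^ν v_i² ≥ ∑_{j=ν+1}^n v_j²} be the future causal cone of ℝ^{n−ν,ν}, T(x) = ∑_{i=1}^ν x_i, and τ(x) = T(x)^{2k+1}. Let p = 0 and q = e_n (the n-th standard basis vector). Then for every ε > 0 there exist finitely many points p = x_0, x_1, …, x_m = q in ℝ^n such that x_{l+1} − x_l ∈ C ∪ (−C) for every l, and ∑_l |τ(x_{l+1}) − τ(x_l)| < ε. Consequently the null distance on ℝ^{n−ν,ν} built from the time function τ = T^{2k+1} vanishes on the pair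 (p,q) and hence fails to be a metric. -/
/-!
Staircase argument. With `δ = 1/N`, alternate the future null step `δ (e₀ + eₙ₋₁)` with the
past timelike step `-δ e₀`. The time function `T` then oscillates between `0` and `δ`, so every
step changes `τ = T^(2k+1)` by exactly `δ^(2k+1)`; after `2N` steps the chain reaches `eₙ₋₁`
with null length `2N δ^(2k+1) = 2 / N^(2k)`, which tends to `0` because `k ≥ 1`.
-/

open Finset

section Zigzag

variable {E : Type*} [AddCommGroup E] (u v : E)

/-- The partial sums of `u, -v, u, -v, …`. -/
def zigzag (l : ℕ) : E := ((l + 1) / 2) • u - (l / 2) • v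

@[simp]
lemma zigzag_zero : zigzag u v 0 = 0 := by
  simp [zigzag]

lemma zigzag_two_mul (N : ℕ) : zigzag u v (2 * N) = N • (u - v) := by
  rw [zigzag, smul_sub, show (2 * N + 1) / 2 = N by omega, show 2 * N / 2 = N by omega]

lemma zigzag_succ_sub (l : ℕ) :
    zigzag u v (l + 1) - zigzag u v l = if Even l then u else -v := by
  rcases Nat.even_or_odd' l with ⟨j, rfl | rfl⟩
  · rw [if_pos (even_two_mul j), zigzag, zigzag, show (2 * j + 1 + 1) / 2 = j + 1 by omega,
      show (2 * j + 1) / 2 = j by omega, show 2 * j / 2 = j by omega, succ_nsmul]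
    abel
  · rw [if_neg (Nat.not_even_iff_odd.mpr (odd_two_mul_add_one j)), zigzag, zigzag,
      show (2 * j + 1 + 1 + 1) / 2 = j + 1 by omega, show (2 * j + 1 + 1) / 2 = j + 1 by omega,
      show (2 * j + 1) / 2 = j by omega]
    simp only [succ_nsmul]
    abel

lemma map_zigzag {F : Type*} [AddCommGroup F] (φ : E →+ F) (l : ℕ) :
    φ (zigzag u v l) = zigzag (φ u) (φ v) l := by
  simp [zigzag]

lemma zigzag_self (t : E) (l : ℕ) : zigzag t t l = if Even l then 0 else t := by
  rcases Nat.even_or_odd' l with ⟨j, rfl | rfl⟩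
  · rw [if_pos (even_two_mul j), zigzag, show (2 * j + 1) / 2 = 2 * j / 2 by omega, sub_self]
  · rw [if_neg (Nat.not_even_iff_odd.mpr (odd_two_mul_add_one j)), zigzag,
      show (2 * j + 1 + 1) / 2 = j + 1 by omega, show (2 * j + 1) / 2 = j by omega, succ_nsmul,
      add_sub_cancel_left]

lemma abs_sub_comp_zigzag_self {F : Type*} [AddCommGroup F] (g : F → ℝ) (t : F) (l : ℕ) :
    |g (zigzag t t (l + 1)) - g (zigzag t t l)| = |g t - g 0| := by
  rcases Nat.even_or_odd l with hl | hl
  · simp [zigzag_self, hl, Nat.even_add_one]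
  · simp [zigzag_self, Nat.not_even_iff_odd.mpr hl, hl, abs_sub_comm]

end Zigzag

section Flat

variable {n ν : ℕ}

lemma flatTime_add (x y : EuclideanSpace ℝ (Fin n)) :
    flatTime n ν (x + y) = flatTime n ν x + flatTime n ν y :=
  Finset.sum_add_distrib

def flatTimeHom (n ν : ℕ) : EuclideanSpace ℝ (Fin n) →+ ℝ :=
  AddMonoidHom.mk' (flatTime n ν) flatTime_add

@[simp]
lemma coe_flatTimeHom : ⇑(flatTimeHom n ν) = flatTime n ν := rfl

lemma flatTime_single (i : Fin n) (c : ℝ) :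
    flatTime n ν (EuclideanSpace.single i c) = if (i : ℕ) < ν then c else 0 := by
  simp [flatTime]

lemma single_add_single_mem_flatFutureCone {i j : Fin n} (hi : (i : ℕ) < ν) (hj : ν ≤ (j : ℕ))
    {a b : ℝ} (ha : 0 < a) (hb : |b| ≤ a) :
    EuclideanSpace.single i a + EuclideanSpace.single j b ∈ flatFutureCone n ν := by
  have hij : i ≠ j := by rintro rfl; omega
  have hv : ∀ l, (EuclideanSpace.single i a + EuclideanSpace.single j b) l =
      (if l = i then a else 0) + (if l = j then b else 0) := by
    simp [PiLp.single_apply]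
  refine ⟨fun h => ?_, fun l hl => ?_, ?_⟩
  · have := congrArg (· i) h
    simp [hv, hij] at this
    linarith
  · have : l ≠ j := by rintro rfl; omega
    simp only [hv, if_neg this, add_zero]
    split_ifs <;> linarith
  · calc ∑ l ∈ univ.filter (fun l : Fin n => ¬ (l : ℕ) < ν), _ = b ^ 2 := by
          rw [Finset.sum_eq_single_of_mem j (by simpa using hj)]
          · simp [hv, hij.symm]
          · intro l hl hlj
            have : l ≠ i := by rintro rfl; simp at hl; omega
            simp [hv, this, hlj]
      _ ≤ a ^ 2 := sq_le_sq' (abs_le.mp hb).1 (abs_le.mp hb).2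
      _ ≤ ∑ l ∈ univ.filter (fun l : Fin n => (l : ℕ) < ν), _ := by
          have := Finset.single_le_sum
            (f := fun l => ((EuclideanSpace.single i a + EuclideanSpace.single j b) l) ^ 2)
            (fun l _ => sq_nonneg _)
            (show i ∈ univ.filter (fun l : Fin n => (l : ℕ) < ν) by simpa using hi)
          rwa [hv, if_pos rfl, if_neg hij, add_zero] at this

lemma single_mem_flatFutureCone {i : Fin n} (hi : (i : ℕ) < ν) {a : ℝ} (ha : 0 < a) :
    EuclideanSpace.single i a ∈ flatFutureCone n ν := by
  refine ⟨by simpa using ha.ne', fun l _ => ?_, ?_⟩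
  · rw [PiLp.single_apply]
    split_ifs <;> linarith
  · rw [Finset.sum_eq_zero fun l hl => ?_]
    · positivity
    · have : l ≠ i := by rintro rfl; simp at hl; omega
      simp [this]

noncomputable def flatStaircase (t s : Fin n) (δ : ℝ) : ℕ → EuclideanSpace ℝ (Fin n) :=
  zigzag (EuclideanSpace.single t δ + EuclideanSpace.single s δ) (EuclideanSpace.single t δ)

lemma flatStaircase_two_mul (t s : Fin n) (δ : ℝ) (N : ℕ) :
    flatStaircase t s δ (2 * N) = EuclideanSpace.single s (N * δ) := by
  rw [flatStaircase, zigzag_two_mul, add_sub_cancel_left]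
  ext j
  simp [PiLp.single_apply]

lemma flatTime_flatStaircase {t s : Fin n} (ht : (t : ℕ) < ν) (hs : ν ≤ (s : ℕ)) (δ : ℝ)
    (l : ℕ) : flatTime n ν (flatStaircase t s δ l) = zigzag δ δ l := by
  simpa [flatStaircase, flatTime_add, flatTime_single, ht, hs.not_gt] using
    map_zigzag (EuclideanSpace.single t δ + EuclideanSpace.single s δ)
      (EuclideanSpace.single t δ) (flatTimeHom n ν) l

lemma flatStaircase_succ_sub_mem {t s : Fin n} (ht : (t : ℕ) < ν) (hs : ν ≤ (s : ℕ)) {δ : ℝ}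
    (hδ : 0 < δ) (l : ℕ) :
    flatStaircase t s δ (l + 1) - flatStaircase t s δ l ∈ flatFutureCone n ν ∨
      -(flatStaircase t s δ (l + 1) - flatStaircase t s δ l) ∈ flatFutureCone n ν := by
  rw [flatStaircase, zigzag_succ_sub]
  split_ifs
  · exact .inl (single_add_single_mem_flatFutureCone ht hs hδ (abs_of_pos hδ).le)
  · exact .inr (by rw [neg_neg]; exact single_mem_flatFutureCone ht hδ)

end Flat

lemma exists_two_mul_inv_pow_lt {k : ℕ} (hk : 1 ≤ k) {ε : ℝ} (hε : 0 < ε) :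
    ∃ N : ℕ, 0 < N ∧ 2 * N * ((N : ℝ)⁻¹) ^ (2 * k + 1) < ε := by
  obtain ⟨N, hN⟩ := exists_nat_gt (2 / ε)
  have hN₀ : (0 : ℝ) < N := (div_pos two_pos hε).trans hN
  refine ⟨N, by exact_mod_cast hN₀, ?_⟩
  have hδ₁ : (N : ℝ)⁻¹ ≤ 1 := inv_le_one_of_one_le₀ (Nat.one_le_cast.mpr (Nat.cast_pos.mp hN₀))
  calc 2 * N * ((N : ℝ)⁻¹) ^ (2 * k + 1) = 2 * ((N : ℝ)⁻¹) ^ (2 * k) := by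
        rw [pow_succ]; field_simp
    _ ≤ 2 * ((N : ℝ)⁻¹) ^ 1 :=
        mul_le_mul_of_nonneg_left (pow_le_pow_of_le_one (by positivity) hδ₁ (by omega)) two_pos.le
    _ < ε := by
        rw [pow_one, ← div_eq_mul_inv, div_lt_iff₀ hN₀]
        rwa [div_lt_iff₀ hε, mul_comm] at hN

/-- Section 5.3 (degenerate null distance example): for `0 < ν < n` and `k ≥ 1`,
with `τ = T^{2k+1}`, `p = 0` and `q = e_n`, there are piecewise causal chains
from `p` to `q` of arbitrarily small null length; hence the null distance built
from the time function `τ` vanishes on `(p,q)` and fails to be a metric. -/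
theorem null_distance_degenerate_for_odd_powers (n ν k : ℕ) (hν : 0 < ν) (hn : ν < n)
    (hk : 1 ≤ k) :
    ∀ ε > (0 : ℝ), ∃ (m : ℕ) (x : Fin (m + 1) → EuclideanSpace ℝ (Fin n)),
      x 0 = 0 ∧
      x (Fin.last m) = EuclideanSpace.single (⟨n - 1, by omega⟩ : Fin n) (1 : ℝ) ∧
      (∀ l : Fin m,
        x l.succ - x l.castSucc ∈ flatFutureCone n ν ∨
        -(x l.succ - x l.castSucc) ∈ flatFutureCone n ν) ∧
      ∑ l : Fin m,
        |flatTime n ν (x l.succ) ^ (2 * k + 1) -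
          flatTime n ν (x l.castSucc) ^ (2 * k + 1)| < ε := by
  intro ε hε
  obtain ⟨N, hN, hsmall⟩ := exists_two_mul_inv_pow_lt hk hε
  have hδ : (0 : ℝ) < (N : ℝ)⁻¹ := by positivity
  set t : Fin n := ⟨0, by omega⟩
  set s : Fin n := ⟨n - 1, by omega⟩
  have ht : (t : ℕ) < ν := hν
  have hs : ν ≤ (s : ℕ) := by simp only [s]; omega
  refine ⟨2 * N, fun l => flatStaircase t s (N : ℝ)⁻¹ l, by simp [flatStaircase], ?_,
    fun l => flatStaircase_succ_sub_mem ht hs hδ l, ?_⟩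
  · simp [flatStaircase_two_mul, hN.ne']
  · simp only [Fin.val_succ, Fin.val_castSucc, flatTime_flatStaircase ht hs,
      abs_sub_comp_zigzag_self (· ^ (2 * k + 1)), sum_const, card_univ, Fintype.card_fin,
      nsmul_eq_mul]
    simpa [abs_of_pos (pow_pos hδ _)] using hsmall
end

section
/- On Minkowski space ℝ^{1+m} = ℝ × ℝ^m with future causal cone C = {(v_0, v̄) ≠ 0 : v_0 ≥ ‖v̄‖}, call a Lipschitz curve β : [0,1] → ℝ^{1+m} piecewise causal if there is a partition 0 = a_0 < a_1 < … < a_k = 1 such that on each subinterval [a_{l−1}, a_l] the almost-everywhere derivative of β lies in C ∪ {0} or in (−C) ∪ {0}; its null length with respect to the time function t(p) = p_0 is L̂(β) = ∑_{l=1}^k |β_0(a_l) − β_0(a_{l−1})|. Then for all p, q ∈ ℝ^{1+m}, the null distance d̂_t(p,q) = inf{L̂(β) : β piecewise causal from p to q} equals max(|q_0 − p_0|, ‖q̄ − p̄‖), where ‖·‖ is the Euclidean norm on ℝ^m. -/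
open MeasureTheory

/-- The set of null lengths of piecewise causal Lipschitz curves from `p` to `q`
in Minkowski space `ℝ × ℝ^m`, with respect to the canonical time function
`t(p) = p₀`: a curve `β` is piecewise causal if for some partition
`0 = a₀ < a₁ < … < a_k = 1` its a.e. derivative lies in `C ∪ {0}` or in
`(−C) ∪ {0}` on each subinterval, and its null length is
`∑ |β₀(a_l) − β₀(a_{l−1})|`. -/
def minkNullLengths (m : ℕ) (p q : ℝ × EuclideanSpace ℝ (Fin m)) : Set ℝ :=
  {L | ∃ (k : ℕ) (a : Fin (k + 1) → ℝ) (K : NNReal)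
      (β : ℝ → ℝ × EuclideanSpace ℝ (Fin m)),
    StrictMono a ∧ a 0 = 0 ∧ a (Fin.last k) = 1 ∧
    LipschitzWith K β ∧ β 0 = p ∧ β 1 = q ∧
    (∀ l : Fin k,
      (∀ᵐ s ∂(volume : Measure ℝ), s ∈ Set.Icc (a l.castSucc) (a l.succ) →
        ∃ v, HasDerivAt β v s ∧ (v = 0 ∨ ‖v.2‖ ≤ v.1)) ∨
      (∀ᵐ s ∂(volume : Measure ℝ), s ∈ Set.Icc (a l.castSucc) (a l.succ) →
        ∃ v, HasDerivAt β v s ∧ (v = 0 ∨ ‖v.2‖ ≤ -v.1))) ∧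
    L = ∑ l : Fin k, |(β (a l.succ)).1 - (β (a l.castSucc)).1|}

/-!
On a causal piece of a curve the spatial displacement is at most the absolute time displacement:
apply the fundamental theorem of calculus for Lipschitz functions to `t ↦ ±β₀(t) - φ(β̄(t))`,
where `φ` is a norming functional for the spatial displacement. Summing over the pieces gives
`max(|q₀ - p₀|, ‖q̄ - p̄‖) ≤ L̂(β)`. Conversely, `q - p` is the sum of two causal vectors whose
time components have absolute values adding up to the maximum (`q - p` itself, or two null
vectors, one future and one past directed), and the broken line through them realises it.
-/

open Set Filter

theorem LipschitzWith.le_of_ae_hasDerivAt_nonneg {K : NNReal} {f : ℝ → ℝ}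
    (hf : LipschitzWith K f) {c d : ℝ} (hcd : c ≤ d)
    (h : ∀ᵐ s, s ∈ Icc c d → ∃ f', HasDerivAt f f' s ∧ 0 ≤ f') :
    f c ≤ f d := by
  rw [← sub_nonneg, ← hf.lipschitzOnWith.absolutelyContinuousOnInterval.integral_deriv_eq_sub]
  refine intervalIntegral.integral_nonneg_of_ae_restrict hcd ?_
  rw [EventuallyLE, ae_restrict_iff' measurableSet_Icc]
  filter_upwards [h] with s hs hmem
  obtain ⟨f', hf', hpos⟩ := hs hmem
  simpa [hf'.deriv] using hpos

theorem Fin.sum_succ_sub_castSucc {X : Type*} [AddCommGroup X] (k : ℕ) (x : Fin (k + 1) → X) :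
    ∑ l : Fin k, (x l.succ - x l.castSucc) = x (Fin.last k) - x 0 := by
  induction k with
  | zero => simp
  | succ n ih =>
    rw [Fin.sum_univ_castSucc]
    simp only [Fin.succ_castSucc]
    rw [ih fun i => x i.castSucc, Fin.succ_last, Fin.castSucc_zero]
    abel

section

variable {E : Type*} [NormedAddCommGroup E] [NormedSpace ℝ E]

theorem norm_sub_le_sub_of_ae_hasDerivAt {Kf Kg : NNReal} {f : ℝ → ℝ} {g : ℝ → E}
    (hf : LipschitzWith Kf f) (hg : LipschitzWith Kg g) {c d : ℝ} (hcd : c ≤ d)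
    (h : ∀ᵐ s, s ∈ Icc c d → ∃ f' g', HasDerivAt f f' s ∧ HasDerivAt g g' s ∧ ‖g'‖ ≤ f') :
    ‖g d - g c‖ ≤ f d - f c := by
  obtain ⟨φ, hφ, hφΔ⟩ := exists_dual_vector'' ℝ (g d - g c)
  have hmono := (hf.sub (φ.lipschitz.comp hg)).le_of_ae_hasDerivAt_nonneg hcd ?_
  · rw [RCLike.ofReal_real_eq_id, id] at hφΔ
    simp only [Function.comp_apply] at hmono
    rw [← hφΔ, map_sub]
    linarith
  · filter_upwards [h] with s hs hmem
    obtain ⟨f', g', hf', hg', hle⟩ := hs hmem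
    refine ⟨f' - φ g', hf'.sub (φ.hasFDerivAt.comp_hasDerivAt s hg'), ?_⟩
    have hφg' : φ g' ≤ ‖g'‖ :=
      calc φ g' ≤ ‖φ‖ * ‖g'‖ := (le_abs_self _).trans (φ.le_opNorm g')
        _ ≤ ‖g'‖ := mul_le_of_le_one_left (norm_nonneg _) hφ
    linarith

def IsCausal (v : ℝ × E) : Prop := ‖v.2‖ ≤ |v.1|

theorem IsCausal.smul {v : ℝ × E} (hv : IsCausal v) (a : ℝ) : IsCausal (a • v) := by
  simp only [IsCausal, Prod.smul_fst, Prod.smul_snd, norm_smul, smul_eq_mul, abs_mul,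
    Real.norm_eq_abs]
  exact mul_le_mul_of_nonneg_left hv (abs_nonneg a)

def IsCausalOn (β : ℝ → ℝ × E) (c d : ℝ) : Prop :=
  (∀ᵐ s, s ∈ Icc c d → ∃ v, HasDerivAt β v s ∧ (v = 0 ∨ ‖v.2‖ ≤ v.1)) ∨
    (∀ᵐ s, s ∈ Icc c d → ∃ v, HasDerivAt β v s ∧ (v = 0 ∨ ‖v.2‖ ≤ -v.1))

theorem IsCausalOn.norm_snd_sub_le_abs_fst_sub {K : NNReal} {β : ℝ → ℝ × E} {c d : ℝ}
    (h : IsCausalOn β c d) (hβ : LipschitzWith K β) (hcd : c ≤ d) :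
    ‖(β d).2 - (β c).2‖ ≤ |(β d).1 - (β c).1| := by
  have hfst := LipschitzWith.prod_fst.comp hβ
  have hsnd := LipschitzWith.prod_snd.comp hβ
  have hderiv {s : ℝ} {v : ℝ × E} (hv : HasDerivAt β v s) :
      HasDerivAt (fun s => (β s).1) v.1 s ∧ HasDerivAt (fun s => (β s).2) v.2 s :=
    ⟨(ContinuousLinearMap.fst ℝ ℝ E).hasFDerivAt.comp_hasDerivAt s hv,
      (ContinuousLinearMap.snd ℝ ℝ E).hasFDerivAt.comp_hasDerivAt s hv⟩
  rcases h with h | h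
  · refine (norm_sub_le_sub_of_ae_hasDerivAt hfst hsnd hcd ?_).trans (le_abs_self _)
    filter_upwards [h] with s hs hmem
    obtain ⟨v, hv, hcone⟩ := hs hmem
    exact ⟨v.1, v.2, (hderiv hv).1, (hderiv hv).2, hcone.elim (fun h => by simp [h]) id⟩
  · refine (norm_sub_le_sub_of_ae_hasDerivAt hfst.neg hsnd hcd ?_).trans ?_
    · filter_upwards [h] with s hs hmem
      obtain ⟨v, hv, hcone⟩ := hs hmem
      exact ⟨-v.1, v.2, (hderiv hv).1.neg, (hderiv hv).2, hcone.elim (fun h => by simp [h]) id⟩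
    · calc _ = (β c).1 - (β d).1 := by simp only [Pi.neg_apply, Function.comp_apply]; ring
        _ ≤ |(β d).1 - (β c).1| := abs_sub_comm (β d).1 (β c).1 ▸ le_abs_self _

theorem isCausalOn_of_ae_hasDerivAt {β : ℝ → ℝ × E} {v : ℝ × E} {c d : ℝ} (hv : IsCausal v)
    (h : ∀ᵐ s, s ∈ Icc c d → HasDerivAt β v s) : IsCausalOn β c d := by
  rcases le_total 0 v.1 with hv₁ | hv₁
  · left
    filter_upwards [h] with s hs hmem
    exact ⟨v, hs hmem, Or.inr (by rwa [IsCausal, abs_of_nonneg hv₁] at hv)⟩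
  · right
    filter_upwards [h] with s hs hmem
    exact ⟨v, hs hmem, Or.inr (by rwa [IsCausal, abs_of_nonpos hv₁] at hv)⟩

theorem exists_isCausal_add_eq (x : ℝ × E) :
    ∃ u w : ℝ × E, IsCausal u ∧ IsCausal w ∧ u + w = x ∧ |u.1| + |w.1| = max |x.1| ‖x.2‖ := by
  rcases le_or_gt ‖x.2‖ |x.1| with hx | hx
  · exact ⟨x, 0, hx, by simp [IsCausal], add_zero x, by simp [max_eq_left hx]⟩
  set r := ‖x.2‖
  have hr : 0 < r := (abs_nonneg _).trans_lt hx
  obtain ⟨hxr₁, hxr₂⟩ := abs_lt.1 hx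
  have hnull : IsCausal (r, x.2) ∧ IsCausal (-r, x.2) := by
    simp [IsCausal, r, abs_of_pos hr]
  -- `α r - (1 - α) r = x.1`
  set α := (x.1 + r) / (2 * r)
  have hα₀ : 0 ≤ α := div_nonneg (by linarith) (by linarith)
  have hα₁ : α ≤ 1 := (div_le_one (by linarith)).2 (by linarith)
  refine ⟨α • (r, x.2), (1 - α) • (-r, x.2), hnull.1.smul α, hnull.2.smul (1 - α), ?_, ?_⟩
  · ext
    · simp only [Prod.fst_add, Prod.smul_fst, smul_eq_mul, α]
      field_simp
      ring
    · simp only [Prod.snd_add, Prod.smul_snd, ← add_smul, add_sub_cancel, one_smul]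
  · simp only [Prod.smul_fst, smul_eq_mul, max_eq_right hx.le, abs_mul, abs_neg,
      abs_of_nonneg hα₀, abs_of_nonneg (sub_nonneg.2 hα₁), abs_of_pos hr]
    ring

end

theorem le_of_mem_minkNullLengths {m : ℕ} {p q : ℝ × EuclideanSpace ℝ (Fin m)} {L : ℝ}
    (hL : L ∈ minkNullLengths m p q) : max |q.1 - p.1| ‖q.2 - p.2‖ ≤ L := by
  obtain ⟨k, a, K, β, ha, ha₀, ha₁, hβ, hβ₀, hβ₁, hcausal, rfl⟩ := hL
  have hpiece (l : Fin k) :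
      ‖(β (a l.succ)).2 - (β (a l.castSucc)).2‖ ≤ |(β (a l.succ)).1 - (β (a l.castSucc)).1| :=
    IsCausalOn.norm_snd_sub_le_abs_fst_sub (hcausal l) hβ (ha (Fin.castSucc_lt_succ (i := l))).le
  have htime := Fin.sum_succ_sub_castSucc k fun i => (β (a i)).1
  have hspace := Fin.sum_succ_sub_castSucc k fun i => (β (a i)).2
  simp only [ha₀, ha₁, hβ₀, hβ₁] at htime hspace
  refine max_le ?_ ?_
  · rw [← htime]
    exact Finset.abs_sum_le_sum_abs _ _
  · rw [← hspace]
    exact (norm_sum_le _ _).trans (Finset.sum_le_sum fun l _ => hpiece l)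

theorem abs_fst_add_abs_fst_mem_minkNullLengths {m : ℕ} (p : ℝ × EuclideanSpace ℝ (Fin m))
    {u w : ℝ × EuclideanSpace ℝ (Fin m)} (hu : IsCausal u) (hw : IsCausal w) :
    |u.1| + |w.1| ∈ minkNullLengths m p (p + u + w) := by
  -- the broken line `p → p + u → p + u + w`, each piece traversed in time `1 / 2`
  set β : ℝ → ℝ × EuclideanSpace ℝ (Fin m) :=
    fun s => p - w + min s (1 / 2) • (2 : ℝ) • u + max s (1 / 2) • (2 : ℝ) • w
  have hβ₀ : β 0 = p := by norm_num [β, smul_smul]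
  have hβ₁ : β (1 / 2) = p + u := by norm_num [β, smul_smul]; module
  have hβ₂ : β 1 = p + u + w := by norm_num [β, smul_smul]; module
  have hderiv₁ (s : ℝ) (hs : s < 1 / 2) : HasDerivAt β ((2 : ℝ) • u) s := by
    have hline := (((hasDerivAt_id s).smul_const ((2 : ℝ) • u)).const_add (p - w)).add_const
      ((1 / 2 : ℝ) • (2 : ℝ) • w)
    rw [one_smul] at hline
    refine hline.congr_of_eventuallyEq ?_
    filter_upwards [Iio_mem_nhds hs] with t ht
    simp only [β, id, min_eq_left (mem_Iio.1 ht).le, max_eq_right (mem_Iio.1 ht).le]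
  have hderiv₂ (s : ℝ) (hs : 1 / 2 < s) : HasDerivAt β ((2 : ℝ) • w) s := by
    have hline := (((hasDerivAt_id s).smul_const ((2 : ℝ) • w)).const_add
      (p - w + (1 / 2 : ℝ) • (2 : ℝ) • u))
    rw [one_smul] at hline
    refine hline.congr_of_eventuallyEq ?_
    filter_upwards [Ioi_mem_nhds hs] with t ht
    simp only [β, id, min_eq_right (mem_Ioi.1 ht).le, max_eq_left (mem_Ioi.1 ht).le]
  have hkink : ∀ᵐ s, s ∉ ({1 / 2} : Set ℝ) := (countable_singleton _).ae_notMem volume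
  have hlip := ((LipschitzWith.const (p - w)).add
      ((ContinuousLinearMap.toSpanSingleton ℝ ((2 : ℝ) • u)).lipschitz.comp
        (LipschitzWith.id.min_const (1 / 2)))).add
    ((ContinuousLinearMap.toSpanSingleton ℝ ((2 : ℝ) • w)).lipschitz.comp
      (LipschitzWith.id.max_const (1 / 2)))
  refine ⟨2, ![0, 1 / 2, 1], _, β, ?_, by simp, by simp, hlip, hβ₀, hβ₂, ?_, ?_⟩
  · norm_num [Fin.strictMono_iff_lt_succ, Fin.forall_fin_two]
  · intro l
    fin_cases l
    · refine isCausalOn_of_ae_hasDerivAt (hu.smul 2) ?_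
      filter_upwards [hkink] with s hs hmem
      simp only [Fin.zero_eta, Fin.castSucc_zero, Fin.succ_zero_eq_one] at hmem
      exact hderiv₁ s (lt_of_le_of_ne (by simpa using hmem.2) hs)
    · refine isCausalOn_of_ae_hasDerivAt (hw.smul 2) ?_
      filter_upwards [hkink] with s hs hmem
      exact hderiv₂ s (lt_of_le_of_ne (by simpa using hmem.1) (Ne.symm hs))
  · rw [one_div] at hβ₁
    simp [Fin.sum_univ_two, hβ₀, hβ₁, hβ₂]

/-- Lemma 2.9 specialized to the flat fiber `Σ = ℝ^m`: the null distance of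
Minkowski space with the canonical time function `t(p) = p₀` is
`d̂_t(p,q) = max(|q₀ − p₀|, ‖q̄ − p̄‖)`. -/
theorem mink_null_distance_eq_max (m : ℕ) (p q : ℝ × EuclideanSpace ℝ (Fin m)) :
    sInf (minkNullLengths m p q) = max |q.1 - p.1| ‖q.2 - p.2‖ := by
  obtain ⟨u, w, hu, hw, huw, hlen⟩ := exists_isCausal_add_eq (q - p)
  have hmem := abs_fst_add_abs_fst_mem_minkNullLengths p hu hw
  rw [add_assoc, huw, add_sub_cancel, hlen] at hmem
  exact IsLeast.csInf_eq ⟨hmem, fun L hL => le_of_mem_minkNullLengths hL⟩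
end

section
/- Let X be a nonempty compact topological space and R a transitive binary relation on X such that for every x ∈ X the set I⁺(x) = {y ∈ X : R x y} is open, and for every x ∈ X there exists y with R y x (so X is covered by the sets I⁺(y)). Then there exists x ∈ X with R x x. -/
/-- Abstract content of Corollary 4.7 (closed manifolds with a proper cone
structure admit closed timelike curves): if `X` is a nonempty compact space and
`R` is a transitive relation with open futures `I⁺(x) = {y : R x y}` such that
every point has a nonempty past (so the sets `I⁺(y)` cover `X`), then some point
satisfies `R x x`. -/
theorem exists_fixed_point_of_transitive_open_cover
    (X : Type*) [TopologicalSpace X] [CompactSpace X] [Nonempty X]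
    (R : X → X → Prop) (htrans : Transitive R)
    (hopen : ∀ x, IsOpen {y | R x y}) (hpast : ∀ x, ∃ y, R y x) :
    ∃ x, R x x := by
  classical
  -- extract a finite subcover of the cover by futures
  obtain ⟨t, ht⟩ := isCompact_univ.elim_finite_subcover (fun x : X => {y | R x y})
    hopen (fun y _ => by
      obtain ⟨x, hx⟩ := hpast y
      exact Set.mem_iUnion.2 ⟨x, hx⟩)
  have hcov : ∀ y : X, ∃ x ∈ t, R x y := by
    intro y
    have := ht (Set.mem_univ y)
    simpa using this
  have htne : t.Nonempty := by
    obtain ⟨y⟩ := ‹Nonempty X›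
    obtain ⟨x, hx, _⟩ := hcov y
    exact ⟨x, hx⟩
  -- define a "past" map on the finite set t
  let g : {a // a ∈ t} → {a // a ∈ t} := fun a =>
    ⟨(hcov a.1).choose, (hcov a.1).choose_spec.1⟩
  have hg : ∀ a, R (g a).1 a.1 := fun a => (hcov a.1).choose_spec.2
  have hchain : ∀ (k : ℕ) (a), R (g^[k + 1] a).1 a.1 := by
    intro k
    induction k with
    | zero => intro a; simpa using hg a
    | succ n ih =>
      intro a
      have h1 : R (g^[n + 1 + 1] a).1 (g a).1 := by
        have := ih (g a)
        simpa [Function.iterate_succ_apply] using this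
      exact htrans h1 (hg a)
  obtain ⟨a0, ha0⟩ := htne
  haveI : Finite {a // a ∈ t} := inferInstance
  obtain ⟨m, n, hne, heq⟩ :=
    Finite.exists_ne_map_eq_of_infinite (fun n : ℕ => g^[n] ⟨a0, ha0⟩)
  rcases Nat.lt_or_ge m n with hmn | hmn
  · obtain ⟨k, hk⟩ := Nat.exists_eq_add_of_lt hmn
    refine ⟨(g^[m] ⟨a0, ha0⟩).1, ?_⟩
    have h1 : R (g^[k + 1] (g^[m] ⟨a0, ha0⟩)).1 (g^[m] ⟨a0, ha0⟩).1 :=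
      hchain k _
    have h2 : g^[k + 1] (g^[m] ⟨a0, ha0⟩) = g^[m] ⟨a0, ha0⟩ := by
      rw [← Function.iterate_add_apply]
      have : k + 1 + m = n := by omega
      rw [this, ← heq]
    rwa [h2] at h1
  · have hmn' : n < m := lt_of_le_of_ne hmn (Ne.symm hne)
    obtain ⟨k, hk⟩ := Nat.exists_eq_add_of_lt hmn'
    refine ⟨(g^[n] ⟨a0, ha0⟩).1, ?_⟩
    have h1 : R (g^[k + 1] (g^[n] ⟨a0, ha0⟩)).1 (g^[n] ⟨a0, ha0⟩).1 :=
      hchain k _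
    have h2 : g^[k + 1] (g^[n] ⟨a0, ha0⟩) = g^[n] ⟨a0, ha0⟩ := by
      rw [← Function.iterate_add_apply]
      have : k + 1 + n = m := by omega
      rw [this, heq]
    rwa [h2] at h1
end

section
/- Let V be a finite-dimensional real vector space and B a symmetric bilinear form on V. Let X_1, …, X_ν ∈ V (ν ≥ 1) be linearly independent, let W = span(X_1,…,X_ν) and W^⊥ = {u ∈ V : B(u,w) = 0 for all w ∈ W}, and assume B is negative definite on W, B is positive definite on W^⊥, and V = W ⊕ W^⊥. On ℝ × V define B'((a,u),(b,w)) = −ab + B(u,w) and B''((a,u),(b,w)) = ab + B(u,w), and set C = {u ∈ V, u ≠ 0 : B(u,u) ≤ 0 and B(u,X_i) ≤ 0 ∀i}, C' = {v = (v_0,v_M) ∈ (ℝ×V), v ≠ 0 : B'(v,v) ≤ 0, B(v_M,X_i) ≤ 0 ∀i, and v_0 ≥ 0}, C'' = {v = (v_0,v_M) ∈ (ℝ×V), v ≠ 0 : B''(v,v) ≤ 0 and B(v_M,X_i) ≤ 0 ∀i}. Then: (a) if (v_0, v_M) ∈ C'' then v_M ∈ C; (b) if v_M ∈ C then (0, v_M)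 ∈ C' ∩ C''; (c) if moreover W = V (i.e. ν = dim V, B is negative definite on all of V and X_1,…,X_ν is a basis), then C' = {(v_0,v_M) : v_0 ≥ 0 and v_M ∈ C} ∪ {(v_0, 0) : v_0 > 0}. -/
/-- The product bilinear form `B'((a,u),(b,w)) = −ab + B(u,w)` on `ℝ × V`
(the metric `−dt² ⊕ g`). -/
def prodMink {V : Type*} [AddCommGroup V] [Module ℝ V]
    (B : LinearMap.BilinForm ℝ V) (v w : ℝ × V) : ℝ :=
  -(v.1 * w.1) + B v.2 w.2

/-- The product bilinear form `B''((a,u),(b,w)) = ab + B(u,w)` on `ℝ × V`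
(the metric `dt² ⊕ g`). -/
def prodRiem {V : Type*} [AddCommGroup V] [Module ℝ V]
    (B : LinearMap.BilinForm ℝ V) (v w : ℝ × V) : ℝ :=
  v.1 * w.1 + B v.2 w.2

/-- The future causal cone `C` of the `(n−ν,ν)`-spacetime model `(V, B, X)`. -/
def coneC {V : Type*} [AddCommGroup V] [Module ℝ V] {ν : ℕ}
    (B : LinearMap.BilinForm ℝ V) (X : Fin ν → V) : Set V :=
  {u | u ≠ 0 ∧ B u u ≤ 0 ∧ ∀ i : Fin ν, B u (X i) ≤ 0}

/-- The future causal cone `C'` of the orthogonally extended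
`(n−ν,ν+1)`-spacetime `(ℝ × V, −dt² ⊕ B)` with additional frame vector
`∂_t = (1,0)`. -/
def coneC' {V : Type*} [AddCommGroup V] [Module ℝ V] {ν : ℕ}
    (B : LinearMap.BilinForm ℝ V) (X : Fin ν → V) : Set (ℝ × V) :=
  {v | v ≠ 0 ∧ prodMink B v v ≤ 0 ∧ (∀ i : Fin ν, B v.2 (X i) ≤ 0) ∧ 0 ≤ v.1}

/-- The future causal cone `C''` of the `(n+1−ν,ν)`-spacetime
`(ℝ × V, dt² ⊕ B)` with the same frame. -/
def coneC'' {V : Type*} [AddCommGroup V] [Module ℝ V] {ν : ℕ}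
    (B : LinearMap.BilinForm ℝ V) (X : Fin ν → V) : Set (ℝ × V) :=
  {v | v ≠ 0 ∧ prodRiem B v v ≤ 0 ∧ ∀ i : Fin ν, B v.2 (X i) ≤ 0}

/-- Pointwise content of Lemma 5.22: (a) `C'' ≼ ℝ × C`; (b) `{0} × C ≼ C' ∩ C''`;
(c) if `W = V` (i.e. `ν = dim V`, `B` negative definite), then
`C' = ([0,∞) × C) ∪ ((0,∞) × {0})`. -/
theorem product_cone_inclusions
    (V : Type*) [AddCommGroup V] [Module ℝ V] [FiniteDimensional ℝ V]
    (B : LinearMap.BilinForm ℝ V) (hsymm : ∀ u w : V, B u w = B w u)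
    (ν : ℕ) (hν : 1 ≤ ν) (X : Fin ν → V) (hX : LinearIndependent ℝ X)
    (hnegW : ∀ w ∈ Submodule.span ℝ (Set.range X), w ≠ 0 → B w w < 0)
    (hposWperp : ∀ u ∈ B.orthogonal (Submodule.span ℝ (Set.range X)), u ≠ 0 → 0 < B u u)
    (hcompl : IsCompl (Submodule.span ℝ (Set.range X))
      (B.orthogonal (Submodule.span ℝ (Set.range X)))) :
    (∀ v ∈ coneC'' B X, v.2 ∈ coneC B X) ∧
    (∀ u ∈ coneC B X, ((0 : ℝ), u) ∈ coneC' B X ∩ coneC'' B X) ∧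
    (Submodule.span ℝ (Set.range X) = ⊤ →
      coneC' B X =
        {v : ℝ × V | 0 ≤ v.1 ∧ v.2 ∈ coneC B X} ∪
        {v : ℝ × V | 0 < v.1 ∧ v.2 = 0}) := by
  refine ⟨?_, ?_, ?_⟩
  · rintro ⟨v0, vM⟩ ⟨hne, hq, hXc⟩
    simp only [prodRiem] at hq
    have hMne : vM ≠ 0 := by
      rintro rfl
      simp only [map_zero] at hq
      have : v0 = 0 := by nlinarith
      exact hne (by simp [this])
    exact ⟨hMne, by nlinarith, hXc⟩
  · rintro u ⟨hne, hq, hXc⟩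
    refine ⟨⟨?_, ?_, hXc, le_refl 0⟩, ?_, ?_, hXc⟩
    · simp [Prod.ext_iff, hne]
    · simp [prodMink, hq]
    · simp [Prod.ext_iff, hne]
    · simp [prodRiem, hq]
  · intro htop
    have hneg : ∀ w : V, w ≠ 0 → B w w < 0 := fun w hw =>
      hnegW w (htop ▸ Submodule.mem_top) hw
    ext ⟨v0, vM⟩
    constructor
    · rintro ⟨hne, hq, hXc, hv0⟩
      by_cases hM : vM = 0
      · right
        refine ⟨lt_of_le_of_ne hv0 fun h => hne ?_, hM⟩
        subst hM
        simp only [Prod.ext_iff, Prod.fst_zero, Prod.snd_zero]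
        exact ⟨h.symm, trivial⟩
      · exact Or.inl ⟨hv0, hM, (hneg vM hM).le, hXc⟩
    · rintro (⟨hv0, hMne, hMq, hXc⟩ | ⟨hv0, hM⟩)
      · refine ⟨?_, ?_, hXc, hv0⟩
        · simp [Prod.ext_iff, hMne]
        · simp only [prodMink]; nlinarith
      · subst hM
        refine ⟨?_, ?_, ?_, hv0.le⟩
        · simp [Prod.ext_iff, hv0.ne']
        · simp only [prodMink, map_zero]; nlinarith
        · simp
end

section
/- Let V be a finite-dimensional real vector space and B a symmetric bilinear form on V. Let X_1, …, X_ν ∈ V (ν ≥ 1) be linearly independent, let W = span(X_1,…,X_ν) and W^⊥ = {u ∈ V : B(u,w) = 0 for all w ∈ W}, and assume B is negative definite on W, B is positive definite on W^⊥, and V = W ⊕ W^⊥. On ℝ × V define B'((a,u),(b,w)) = −ab + B(u,w). Let ε > 0, S = X_1 + … + X_ν, and set Y_i = (0, X_i) for i = 1,…,ν and Y_{ν+1} = (1, −εS). Then: (a) Y_1, …, Y_{ν+1} are linearly independent and B'(Y_i, Y_i) < 0 for all i = 1,…,ν+1; and (b) every v = (v_0, v_M) ∈ ℝ × V with v ≠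 0, B'(v,v) ≤ 0, and B'(v, Y_i) ≤ 0 for all i = 1,…,ν+1 satisfies v_0 > 0. -/
/-- Pointwise content of Proposition 5.23: with `S = X₁ + … + X_ν`,
`Yᵢ = (0, Xᵢ)` for `i ≤ ν` and `Y_{ν+1} = (1, −εS)` for `ε > 0`, the vectors
`Y₁,…,Y_{ν+1}` are linearly independent and `B'`-timelike, and every future
directed causal vector `v` for this frame satisfies `v₀ > 0` (so `t` is a
temporal function and the product is stably causal). -/
theorem perturbed_frame_temporal
    (V : Type*) [AddCommGroup V] [Module ℝ V] [FiniteDimensional ℝ V]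
    (B : LinearMap.BilinForm ℝ V) (hsymm : ∀ u w : V, B u w = B w u)
    (ν : ℕ) (hν : 1 ≤ ν) (X : Fin ν → V) (hX : LinearIndependent ℝ X)
    (hnegW : ∀ w ∈ Submodule.span ℝ (Set.range X), w ≠ 0 → B w w < 0)
    (hposWperp : ∀ u ∈ B.orthogonal (Submodule.span ℝ (Set.range X)), u ≠ 0 → 0 < B u u)
    (hcompl : IsCompl (Submodule.span ℝ (Set.range X))
      (B.orthogonal (Submodule.span ℝ (Set.range X))))
    (ε : ℝ) (hε : 0 < ε)
    (Y : Fin (ν + 1) → ℝ × V)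
    (hY : Y = Fin.snoc (fun i : Fin ν => ((0 : ℝ), X i))
      ((1 : ℝ), -(ε • ∑ i : Fin ν, X i))) :
    (LinearIndependent ℝ Y ∧ ∀ i : Fin (ν + 1), prodMink B (Y i) (Y i) < 0) ∧
    (∀ v : ℝ × V, v ≠ 0 → prodMink B v v ≤ 0 →
      (∀ i : Fin (ν + 1), prodMink B v (Y i) ≤ 0) → 0 < v.1) := by
  subst hY
  set S := ∑ i : Fin ν, X i with hS
  have hXmem : ∀ i, X i ∈ Submodule.span ℝ (Set.range X) :=
    fun i => Submodule.subset_span ⟨i, rfl⟩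
  have hXne : ∀ i, X i ≠ 0 := fun i => hX.ne_zero i
  have hSmem : S ∈ Submodule.span ℝ (Set.range X) :=
    Submodule.sum_mem _ fun i _ => hXmem i
  have hSne : S ≠ 0 := by
    intro h
    have h1 := Fintype.linearIndependent_iff.mp hX (fun _ => 1) (by simpa using h)
    obtain ⟨i⟩ : Nonempty (Fin ν) := ⟨⟨0, hν⟩⟩
    simpa using h1 i
  have hBSS : B S S < 0 := hnegW S hSmem hSne
  constructor
  · constructor
    · rw [Fintype.linearIndependent_iff]
      intro g hg
      rw [Fin.sum_univ_castSucc] at hg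
      have h1 := congrArg Prod.fst hg
      have h2 := congrArg Prod.snd hg
      simp [Prod.fst_sum, Prod.snd_sum] at h1 h2
      rw [h1] at h2
      simp at h2
      have h3 := Fintype.linearIndependent_iff.mp hX _ h2
      intro i
      refine Fin.lastCases ?_ ?_ i
      · exact h1
      · exact h3
    · intro i
      refine Fin.lastCases ?_ ?_ i
      · simp only [Fin.snoc_last, prodMink, map_neg, map_smul, LinearMap.neg_apply,
          LinearMap.smul_apply, smul_eq_mul]
        nlinarith [mul_neg_of_pos_of_neg (mul_pos hε hε) hBSS]
      · intro i
        simpa [prodMink] using hnegW (X i) (hXmem i) (hXne i)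
  · intro v hv hvv hvY
    have hcs : ∀ i : Fin ν, B v.2 (X i) ≤ 0 := by
      intro i
      have := hvY i.castSucc
      simpa [prodMink] using this
    have hsum : B v.2 S ≤ 0 := by
      rw [hS, map_sum]
      exact Finset.sum_nonpos fun i _ => hcs i
    have hlast := hvY (Fin.last ν)
    simp only [Fin.snoc_last, prodMink, map_neg, map_smul, smul_eq_mul, mul_one] at hlast
    -- hlast : -v.1 + -(ε * B v.2 S) ≤ 0
    have hv0 : 0 ≤ v.1 := by nlinarith
    rcases lt_or_eq_of_le hv0 with h | h
    · exact h
    · exfalso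
      have hz : B v.2 S = 0 := by nlinarith
      have heach : ∀ i : Fin ν, B v.2 (X i) = 0 := by
        have hz' : ∑ i : Fin ν, B v.2 (X i) = 0 := by
          rw [hS, map_sum] at hz; exact hz
        intro i
        have := (Finset.sum_eq_zero_iff_of_nonpos (fun i _ => hcs i)).mp hz' i (Finset.mem_univ i)
        exact this
      have hmem : v.2 ∈ B.orthogonal (Submodule.span ℝ (Set.range X)) := by
        intro n hn
        induction hn using Submodule.span_induction with
        | mem x hx =>
          obtain ⟨i, rfl⟩ := hx
          show B (X i) v.2 = 0
          rw [hsymm]; exact heach i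
        | zero => simp [LinearMap.BilinForm.IsOrtho]
        | add x y _ _ hx hy =>
          show B (x + y) v.2 = 0
          simp only [map_add, LinearMap.add_apply]
          rw [hx, hy]; ring
        | smul c x _ hx =>
          show B (c • x) v.2 = 0
          simp only [map_smul, LinearMap.smul_apply, smul_eq_mul]
          rw [hx]; ring
      have hv2ne : v.2 ≠ 0 := by
        intro h2
        apply hv
        ext
        · exact h.symm
        · exact h2
      have hpos := hposWperp v.2 hmem hv2ne
      have : prodMink B v v = B v.2 v.2 := by simp [prodMink, ← h]
      rw [this] at hvv
      linarith
end
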